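/- arXiv:2505.15201 — 3 statements merged into one kernel-verified Lean document; each statement's English description precedes it below -/
import Mathlib

section
/- Let X be a nonempty finite type and p : ℝ → X → ℝ a parametrized family of probability mass functions (p(θ, x) > 0, ∑_{x∈X} p(θ, x) = 1, and θ ↦ p(θ, x) differentiable for each x). Let g : X → ℝ and let 1 ≤ k ≤ n. Define maxg@k(θ) = ∑_{y : Fin k → X} (∏_{i} p(θ, yᵢ)) · max_{1≤i≤k} g(yᵢ). For a tuple x : Fin n → X, define s_i(x) = (1/C(n,k)) · ∑_{I ⊆ {1,...,n}, |I| = k, i ∈ I} max_{j∈I} g(x_j). Then for every θ: ∑_{x : Fin n → X} (∏_{i} p(θ, xᵢ)) · ∑_{i=1}^{n} s_i(x) · (d/dθ p(θ, xᵢ))/p(θ, xᵢ) = d/dθ maxg@k(θ). In other words, the estimator ∑_i s_i(x) ∇_θ log p(xᵢ|θ) is an unbiased estimator of the gradient of maxg@k. -/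
/-!
Write `ψ(x) = ∇ log p(x | θ)`. Differentiating the product density gives the score-function
identity `∇ maxg@k = E_{y ∼ p^k}[max_i g(yᵢ) · ∑ᵢ ψ(yᵢ)]`. On the estimator side, exchanging
the sums over `i` and over `I ∋ i` rewrites `∑ᵢ sᵢ(x) ψ(xᵢ)` as the average over the `C(n, k)`
subsets `I` of size `k` of `max_{j ∈ I} g(x_j) · ∑_{i ∈ I} ψ(xᵢ)`. Each summand depends only on
the coordinates in `I`; the other coordinates marginalize out since `p` sums to one, so each has
expectation `E_{y ∼ p^k}[max_i g(yᵢ) · ∑ᵢ ψ(yᵢ)]`.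
-/

/-- The maximum of `g` over a finite index set `I` (equal to `max_{i ∈ I} g i`
whenever `I` is nonempty). -/
noncomputable def finsetMax {α : Type*} (I : Finset α) (g : α → ℝ) : ℝ :=
  WithBot.unbotD 0 (I.sup fun a => ((g a : ℝ) : WithBot ℝ))

open Finset

theorem deriv_finsetProd_eq_prod_mul_sum_logDeriv {𝕜 𝕜' ι : Type*} [NontriviallyNormedField 𝕜]
    [NontriviallyNormedField 𝕜'] [NormedAlgebra 𝕜 𝕜'] {s : Finset ι} {f : ι → 𝕜 → 𝕜'} {x : 𝕜}
    (hf : ∀ i ∈ s, f i x ≠ 0) (hd : ∀ i ∈ s, DifferentiableAt 𝕜 (f i) x) :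
    deriv (fun t => ∏ i ∈ s, f i t) x = (∏ i ∈ s, f i x) * ∑ i ∈ s, logDeriv (f i) x := by
  rw [← logDeriv_prod hf hd, logDeriv_apply, mul_div_cancel₀ _ (prod_ne_zero_iff.mpr hf)]

theorem deriv_sum_pi_prod_mul {κ X : Type*} [Fintype κ] [DecidableEq κ] [Fintype X]
    {p : ℝ → X → ℝ} {θ : ℝ} (hp : ∀ x, p θ x ≠ 0)
    (hdiff : ∀ x, DifferentiableAt ℝ (fun t => p t x) θ) (G : (κ → X) → ℝ) :
    deriv (fun t => ∑ y : κ → X, (∏ i, p t (y i)) * G y) θ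
      = ∑ y : κ → X, (∏ i, p θ (y i)) * (G y * ∑ i, logDeriv (fun t => p t (y i)) θ) := by
  have hprod (y : κ → X) : DifferentiableAt ℝ (fun t => ∏ i, p t (y i)) θ :=
    .fun_finsetProd fun i _ => hdiff (y i)
  rw [deriv_fun_sum fun y _ => (hprod y).mul_const _]
  refine sum_congr rfl fun y _ => ?_
  rw [deriv_mul_const (hprod y), deriv_finsetProd_eq_prod_mul_sum_logDeriv
    (fun i _ => hp (y i)) fun i _ => hdiff (y i)]
  ring

theorem finsetMax_map {α β : Type*} (s : Finset α) (f : α ↪ β) (g : β → ℝ) :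
    finsetMax (s.map f) g = finsetMax s (g ∘ f) := by
  rw [finsetMax, finsetMax, sup_map]
  rfl

theorem sum_mul_sum_filter_mem {ι : Type*} [Fintype ι] [DecidableEq ι] (P : Finset (Finset ι))
    (M : Finset ι → ℝ) (w : ι → ℝ) :
    ∑ i, (∑ I ∈ P with i ∈ I, M I) * w i = ∑ I ∈ P, M I * ∑ i ∈ I, w i := by
  simp only [sum_filter, sum_mul, mul_sum]
  rw [sum_comm]
  refine sum_congr rfl fun I _ => ?_
  simp only [ite_mul, zero_mul, sum_ite_mem, univ_inter]

section Marginal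

variable {ι κ X : Type*} [Fintype ι] [DecidableEq ι] [Fintype κ] [DecidableEq κ] [Fintype X]
  {q : X → ℝ}

theorem sum_pi_prod_eq_one (hq : ∑ x, q x = 1) : ∑ v : ι → X, ∏ j, q (v j) = 1 := by
  rw [← Fintype.prod_sum fun _ => q]
  simp [hq]

theorem sum_pi_prod_mul_comp_subtype (hq : ∑ x, q x = 1) (P : ι → Prop) [DecidablePred P]
    (F : ({j // P j} → X) → ℝ) :
    ∑ x : ι → X, (∏ j, q (x j)) * F (fun j => x j)
      = ∑ u : {j // P j} → X, (∏ j, q (u j)) * F u := by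
  rw [← (Equiv.piEquivPiSubtypeProd P fun _ => X).symm.sum_comp, Fintype.sum_prod_type]
  refine sum_congr rfl fun u _ => ?_
  have hsplit : ∀ v : {j // ¬P j} → X,
      ∏ j, q ((Equiv.piEquivPiSubtypeProd P fun _ => X).symm (u, v) j)
        = (∏ j, q (u j)) * ∏ j, q (v j) := fun v => by
    rw [← Fintype.prod_subtype_mul_prod_subtype P]
    congr 1 <;> exact prod_congr rfl fun j _ => by simp [j.2]
  simp only [hsplit]
  calc _ = ∑ v : {j // ¬P j} → X, (∏ j, q (u j)) * F u * ∏ j, q (v j) := by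
        refine sum_congr rfl fun v _ => ?_
        simp only [Equiv.piEquivPiSubtypeProd_symm_apply, Subtype.prop, dif_pos]
        ring
    _ = _ := by rw [← mul_sum, sum_pi_prod_eq_one hq, mul_one]

theorem sum_pi_prod_mul_comp_embedding (hq : ∑ x, q x = 1) (f : κ ↪ ι) (F : (κ → X) → ℝ) :
    ∑ x : ι → X, (∏ j, q (x j)) * F (x ∘ f)
      = ∑ y : κ → X, (∏ i, q (y i)) * F y := by
  classical
  let e : κ ≃ {j // j ∈ Set.range f} := Equiv.ofInjective f f.injective
  refine (sum_pi_prod_mul_comp_subtype hq (· ∈ Set.range f) fun u => F (u ∘ e)).trans ?_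
  -- `convert` bridges the two `Fintype` instances on the subtype `Set.range f`.
  convert Fintype.sum_equiv (e.arrowCongr (Equiv.refl X)).symm
    (fun u => (∏ j, q (u j)) * F (u ∘ e)) (fun y => (∏ i, q (y i)) * F y) fun u => ?_
  simp [Equiv.arrowCongr, ← e.symm.prod_comp]

theorem sum_pi_prod_mul_finsetMax_map_mul_sum (hq : ∑ x, q x = 1) (f : κ ↪ ι) (g w : X → ℝ) :
    ∑ x : ι → X, (∏ j, q (x j)) *
        (finsetMax (univ.map f) (fun j => g (x j)) * ∑ i ∈ univ.map f, w (x i))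
      = ∑ y : κ → X, (∏ i, q (y i)) * (finsetMax univ (fun i => g (y i)) * ∑ i, w (y i)) := by
  simp only [finsetMax_map, sum_map]
  exact sum_pi_prod_mul_comp_embedding hq f fun y =>
    finsetMax univ (fun i => g (y i)) * ∑ i, w (y i)

end Marginal

theorem unbiased_maxgk_gradient_estimator_general {X : Type*} [Fintype X]
    (p : ℝ → X → ℝ)
    (hpos : ∀ θ x, 0 < p θ x)
    (hsum : ∀ θ, ∑ x, p θ x = 1)
    (hdiff : ∀ x, Differentiable ℝ fun θ => p θ x)
    (g : X → ℝ)
    (n k : ℕ) (hkn : k ≤ n) (θ : ℝ) :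
    ∑ x : Fin n → X, (∏ i, p θ (x i)) *
        ∑ i, ((1 / (n.choose k : ℝ)) *
            ∑ I ∈ (Finset.powersetCard k (Finset.univ : Finset (Fin n))).filter
                (fun I => i ∈ I),
              finsetMax I (fun j => g (x j))) *
          (deriv (fun t => p t (x i)) θ / p θ (x i))
      = deriv (fun t => ∑ y : Fin k → X,
          (∏ i, p t (y i)) * finsetMax (Finset.univ : Finset (Fin k)) (fun i => g (y i))) θ := by
  set score : X → ℝ := fun a => logDeriv (fun t => p t a) θ
  set D := ∑ y : Fin k → X,
    (∏ i, p θ (y i)) * (finsetMax univ (fun i => g (y i)) * ∑ i, score (y i))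
  have hmarginal : ∀ I ∈ powersetCard k (univ : Finset (Fin n)), ∑ x : Fin n → X,
      (∏ j, p θ (x j)) * (finsetMax I (fun j => g (x j)) * ∑ i ∈ I, score (x i)) = D := by
    intro I hI
    rw [← map_orderEmbOfFin_univ I (mem_powersetCard.1 hI).2]
    exact sum_pi_prod_mul_finsetMax_map_mul_sum (hsum θ) _ g score
  rw [deriv_sum_pi_prod_mul (fun x => (hpos θ x).ne') (fun x => (hdiff x).differentiableAt)]
  calc _ = ∑ x : Fin n → X, (∏ j, p θ (x j)) * ∑ I ∈ powersetCard k univ,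
          (1 / (n.choose k : ℝ)) * finsetMax I (fun j => g (x j)) * ∑ i ∈ I, score (x i) := by
        refine sum_congr rfl fun x _ => ?_
        rw [← sum_mul_sum_filter_mem]
        simp only [mul_sum]
        rfl
    _ = (1 / (n.choose k : ℝ)) * ∑ I ∈ powersetCard k univ, D := by
        rw [← sum_congr rfl hmarginal]
        simp only [mul_sum]
        rw [sum_comm]
        exact sum_congr rfl fun I _ => sum_congr rfl fun x _ => sum_congr rfl fun i _ => by ring
    _ = D := by
        rw [sum_const, card_powersetCard, card_univ, Fintype.card_fin, nsmul_eq_mul]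
        field_simp [(Nat.choose_pos hkn).ne']

/-- The estimator ∑_i s_i(x) ∇_θ log p(xᵢ|θ), with
s_i(x) = (1/C(n,k)) ∑_{|I| = k, i ∈ I} max_{j∈I} g(x_j), is an unbiased
estimator of the gradient of
maxg@k(θ) = ∑_{y : Fin k → X} (∏ᵢ p(θ, yᵢ)) · max_{1≤i≤k} g(yᵢ). -/
theorem unbiased_maxgk_gradient_estimator {X : Type*} [Fintype X] [Nonempty X]
    (p : ℝ → X → ℝ)
    (hpos : ∀ θ x, 0 < p θ x)
    (hsum : ∀ θ, ∑ x, p θ x = 1)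
    (hdiff : ∀ x, Differentiable ℝ fun θ => p θ x)
    (g : X → ℝ)
    (n k : ℕ) (hk : 1 ≤ k) (hkn : k ≤ n) (θ : ℝ) :
    ∑ x : Fin n → X, (∏ i, p θ (x i)) *
        ∑ i, ((1 / (n.choose k : ℝ)) *
            ∑ I ∈ (Finset.powersetCard k (Finset.univ : Finset (Fin n))).filter
                (fun I => i ∈ I),
              finsetMax I (fun j => g (x j))) *
          (deriv (fun t => p t (x i)) θ / p θ (x i))
      = deriv (fun t => ∑ y : Fin k → X,
          (∏ i, p t (y i)) * finsetMax (Finset.univ : Finset (Fin k)) (fun i => g (y i))) θ :=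
  unbiased_maxgk_gradient_estimator_general p hpos hsum hdiff g n k hkn θ
end

section
/- Let X be a nonempty finite type and p : ℝ → X → ℝ a parametrized family of probability mass functions (p(θ, x) > 0, ∑_{x∈X} p(θ, x) = 1, and θ ↦ p(θ, x) differentiable for each x). Let g : X → ℝ and let 1 ≤ k < n. Define maxg@k(θ) = ∑_{y : Fin k → X} (∏_{i} p(θ, yᵢ)) · max_{1≤i≤k} g(yᵢ). For a tuple x : Fin n → X, define S(j, k, A; x) = (1/C(|A|, k)) · ∑_{I ⊆ A, |I| = k, j ∈ I} max_{b∈I} g(x_b) for A ⊆ {1,...,n}, and define the leave-one-out baselined reward s_i^{loo}(x) = S(i, k, {1,...,n}; x) − (1/(n−1)) · ∑_{j ≠ i} S(j, k, {1,...,n}∖{i}; x). Then for every θ: ∑_{x : Fin n → X} (∏_{i} p(θ, xᵢ)) · ∑_{i=1}^{n} s_i^{loo}(x) · (d/dθ p(θ, xᵢ))/p(θ, xᵢ) = d/dθ maxg@k(θ). -/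
/-- S(j, k, A; x) = (1/C(|A|, k)) · ∑_{I ⊆ A, |I| = k, j ∈ I} max_{b∈I} g(x_b). -/
noncomputable def Sfun {X : Type*} (g : X → ℝ) {n : ℕ} (x : Fin n → X)
    (j : Fin n) (k : ℕ) (A : Finset (Fin n)) : ℝ :=
  (1 / (A.card.choose k : ℝ)) *
    ∑ I ∈ (Finset.powersetCard k A).filter (fun I => j ∈ I),
      finsetMax I (fun b => g (x b))

/-!
The score `∂_θ log p(x_i | θ)` has mean zero, so its product with any function of the other
coordinates has mean zero as well. This kills the leave-one-out baseline, and, after expanding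
`S(i, k, [n])` as an average over `k`-subsets `I`, it lets the scores of the coordinates outside
`I` be added for free. What remains is `C(n, k)⁻¹ ∑_I E[max_I g · ∑_i score_i]`, which by the
log-derivative trick is `C(n, k)⁻¹ ∑_I ∂_θ E[max_I g]`; each `E[max_I g]` is `maxg@k` because
the coordinates are i.i.d.
-/

open Finset

section FinsetMax

variable {α : Type*}

lemma finsetMax_congr {I : Finset α} {f f' : α → ℝ} (h : ∀ b ∈ I, f b = f' b) :
    finsetMax I f = finsetMax I f' := by
  unfold finsetMax
  rw [sup_congr rfl fun b hb => by rw [h b hb]]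

lemma finsetMax_eq_finsetMax_univ (I : Finset α) (f : α → ℝ) :
    finsetMax I f = finsetMax (univ : Finset I) (fun b => f b) := by
  unfold finsetMax
  rw [univ_eq_attach]
  exact congrArg _ (sup_attach I _).symm

lemma finsetMax_univ_comp_equiv {β : Type*} [Fintype α] [Fintype β] (e : α ≃ β) (f : β → ℝ) :
    finsetMax univ (f ∘ e) = finsetMax univ f := by
  unfold finsetMax
  rw [← map_univ_equiv e, sup_map]
  rfl

lemma dependsOn_finsetMax {ι X : Type*} (g : X → ℝ) (I : Finset ι) :
    DependsOn (fun x : ι → X => finsetMax I (fun b => g (x b))) I :=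
  fun _ _ h => finsetMax_congr fun b hb => congrArg g (h b hb)

end FinsetMax

lemma dependsOn_Sfun {X : Type*} (g : X → ℝ) {n : ℕ} (j : Fin n) (k : ℕ)
    (A : Finset (Fin n)) : DependsOn (fun x : Fin n → X => Sfun g x j k A) A := by
  intro x y h
  simp only [Sfun]
  refine congrArg _ (sum_congr rfl fun I hI => dependsOn_finsetMax g I fun b hb => h b ?_)
  exact (mem_powersetCard.1 (mem_filter.1 hI).1).1 hb

lemma sum_mul_Sfun {X : Type*} (g : X → ℝ) {n : ℕ} (x : Fin n → X) (k : ℕ)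
    (A : Finset (Fin n)) (c : Fin n → ℝ) :
    ∑ i ∈ A, c i * Sfun g x i k A =
      1 / ((#A).choose k : ℝ) *
        ∑ I ∈ powersetCard k A, ∑ i ∈ I, c i * finsetMax I (fun b => g (x b)) := by
  simp only [Sfun, mul_sum]
  refine (sum_comm' fun i I => ?_).trans
    (sum_congr rfl fun I _ => sum_congr rfl fun i _ => by ring)
  simp only [mem_filter, mem_powersetCard]
  constructor
  · rintro ⟨-, hIA, hi⟩
    exact ⟨hi, hIA⟩
  · rintro ⟨hi, hIA, hI⟩
    exact ⟨hIA hi, ⟨hIA, hI⟩, hi⟩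

section ProductWeights

variable {ι X R : Type*} [Fintype ι] [DecidableEq ι] [Fintype X] [CommSemiring R]

lemma sum_mul_eq_zero_of_forall_eq {q f : X → R} (hq : ∑ a, q a = 0)
    (hf : ∀ a b, f a = f b) : ∑ a, q a * f a = 0 := by
  cases isEmpty_or_nonempty X with
  | inl _ => simp
  | inr h =>
    obtain ⟨a₀⟩ := h
    rw [sum_congr rfl fun a _ => by rw [hf a a₀], ← sum_mul, hq, zero_mul]

lemma sum_pi_mul_eq_zero_of_dependsOn {q : X → R} (hq : ∑ a, q a = 0) (i : ι)
    {H : (ι → X) → R} (hH : DependsOn H {i}ᶜ) : ∑ x : ι → X, q (x i) * H x = 0 := by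
  rw [← (Equiv.funSplitAt i X).symm.sum_comp, Fintype.sum_prod_type, sum_comm]
  refine sum_eq_zero fun v _ => ?_
  simp only [Equiv.funSplitAt_symm_apply, dite_true]
  refine sum_mul_eq_zero_of_forall_eq hq fun a b => hH fun j hj => ?_
  simp [show j ≠ i from hj]

lemma sum_prod_mul_restrict (q : X → R) (hq : ∑ a, q a = 1) (s : Finset ι)
    (F : (s → X) → R) :
    ∑ x : ι → X, (∏ j, q (x j)) * F (s.restrict x) = ∑ y : s → X, (∏ j, q (y j)) * F y := by
  have hcompl : ∑ v : {j // j ∉ s} → X, ∏ j, q (v j) = 1 := by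
    rw [← Fintype.prod_sum (fun _ a => q a), hq, prod_const_one]
  calc ∑ x : ι → X, (∏ j, q (x j)) * F (s.restrict x)
      = ∑ x : ι → X, ((∏ j : s, q (x j)) * F (s.restrict x)) * ∏ j : {j // j ∉ s}, q (x j) := by
        refine sum_congr rfl fun x _ => ?_
        rw [← Fintype.prod_subtype_mul_prod_subtype (· ∈ s), mul_right_comm]
        congr
        exact Subsingleton.elim _ _
    _ = ∑ y : s → X, ∑ v : {j // j ∉ s} → X, ((∏ j, q (y j)) * F y) * ∏ j, q (v j) := by
        rw [← Fintype.sum_prod_type']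
        exact Fintype.sum_equiv (Equiv.piEquivPiSubtypeProd (· ∈ s) _) _ _ fun x => rfl
    _ = ∑ y : s → X, (∏ j, q (y j)) * F y := by
        simp_rw [← mul_sum, hcompl, mul_one]

lemma sum_prod_mul_finsetMax_univ_equiv (q : X → ℝ) (g : X → ℝ) {α β : Type*}
    [Fintype α] [DecidableEq α] [Fintype β] [DecidableEq β] (e : α ≃ β) :
    ∑ y : α → X, (∏ a, q (y a)) * finsetMax univ (fun a => g (y a)) =
      ∑ y : β → X, (∏ b, q (y b)) * finsetMax univ (fun b => g (y b)) := by
  refine Fintype.sum_equiv (e.arrowCongr (Equiv.refl X)) _ _ fun y => ?_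
  simp only [Equiv.arrowCongr_apply, Equiv.coe_refl, Function.comp_apply, id]
  rw [← e.symm.prod_comp, ← finsetMax_univ_comp_equiv e.symm]
  rfl

lemma sum_prod_mul_finsetMax_of_card_eq (q : X → ℝ) (hq : ∑ a, q a = 1) (g : X → ℝ)
    {I : Finset ι} {k : ℕ} (hI : #I = k) :
    ∑ x : ι → X, (∏ j, q (x j)) * finsetMax I (fun b => g (x b)) =
      ∑ y : Fin k → X, (∏ i, q (y i)) * finsetMax univ (fun i => g (y i)) := by
  simp_rw [finsetMax_eq_finsetMax_univ I]
  exact (sum_prod_mul_restrict q hq I fun y => finsetMax univ fun b => g (y b)).trans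
    (sum_prod_mul_finsetMax_univ_equiv q g (I.equivFinOfCardEq hI))

end ProductWeights

section Score

variable {ι X : Type*} [Fintype ι] [DecidableEq ι]

/-- `p(x | θ) · ∂_θ log p(x_i | θ)` for `p(x | θ) = ∏ j, p θ (x j)`, with the division
cancelled. -/
noncomputable def weightedScore (p : ℝ → X → ℝ) (θ : ℝ) (x : ι → X) (i : ι) : ℝ :=
  (∏ j ∈ univ.erase i, p θ (x j)) * deriv (fun t => p t (x i)) θ

variable {p : ℝ → X → ℝ} {θ : ℝ}

lemma prod_mul_div_eq_weightedScore {x : ι → X} {i : ι} (hp : p θ (x i) ≠ 0) :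
    (∏ j, p θ (x j)) * (deriv (fun t => p t (x i)) θ / p θ (x i)) = weightedScore p θ x i := by
  rw [weightedScore, ← mul_prod_erase univ _ (mem_univ i)]
  field_simp

lemma sum_deriv_eq_zero [Fintype X] (hsum : ∀ t, ∑ a, p t a = 1)
    (hdiff : ∀ a, DifferentiableAt ℝ (fun t => p t a) θ) :
    ∑ a, deriv (fun t => p t a) θ = 0 := by
  rw [← deriv_fun_sum fun a _ => hdiff a]
  simp [hsum]

lemma sum_weightedScore_mul_eq_zero [Fintype X] (hsum : ∀ t, ∑ a, p t a = 1)
    (hdiff : ∀ a, DifferentiableAt ℝ (fun t => p t a) θ) (i : ι) {h : (ι → X) → ℝ}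
    (hh : DependsOn h {i}ᶜ) : ∑ x, weightedScore p θ x i * h x = 0 := by
  have hprod : DependsOn (fun x : ι → X => (∏ j ∈ univ.erase i, p θ (x j)) * h x) {i}ᶜ :=
    fun x y hxy => by
      simp only
      rw [prod_congr rfl fun j hj => by rw [hxy j (ne_of_mem_erase hj)], hh hxy]
  rw [← sum_pi_mul_eq_zero_of_dependsOn (sum_deriv_eq_zero hsum hdiff) i hprod]
  exact sum_congr rfl fun x _ => by rw [weightedScore]; ring

lemma hasDerivAt_sum_prod_mul [Fintype X] (hdiff : ∀ a, DifferentiableAt ℝ (fun t => p t a) θ)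
    (f : (ι → X) → ℝ) :
    HasDerivAt (fun t => ∑ x, (∏ j, p t (x j)) * f x)
      (∑ x, ∑ i, weightedScore p θ x i * f x) θ := by
  refine HasDerivAt.fun_sum fun x _ => ?_
  rw [← sum_mul]
  simpa [weightedScore] using
    (HasDerivAt.fun_finsetProd fun j _ => (hdiff (x j)).hasDerivAt).mul_const (f x)

end Score

lemma sum_weightedScore_mul_Sfun_univ {X : Type*} [Fintype X] {p : ℝ → X → ℝ} {θ : ℝ}
    (hsum : ∀ t, ∑ a, p t a = 1) (hdiff : ∀ a, DifferentiableAt ℝ (fun t => p t a) θ)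
    (g : X → ℝ) {n k : ℕ} (hkn : k ≤ n) :
    ∑ x : Fin n → X, ∑ i, weightedScore p θ x i * Sfun g x i k univ =
      deriv (fun t => ∑ y : Fin k → X,
        (∏ i, p t (y i)) * finsetMax univ (fun i => g (y i))) θ := by
  set maxAtK := fun t => ∑ y : Fin k → X, (∏ i, p t (y i)) * finsetMax univ (fun i => g (y i))
  have hC : (n.choose k : ℝ) ≠ 0 := Nat.cast_ne_zero.2 (Nat.choose_pos hkn).ne'
  have hterm : ∀ I ∈ powersetCard k (univ : Finset (Fin n)),
      ∑ x : Fin n → X, ∑ i ∈ I, weightedScore p θ x i * finsetMax I (fun b => g (x b)) =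
        deriv maxAtK θ := by
    intro I hI
    have hmarg : (fun t => ∑ x : Fin n → X, (∏ j, p t (x j)) * finsetMax I (fun b => g (x b)))
        = maxAtK :=
      funext fun t => sum_prod_mul_finsetMax_of_card_eq (p t) (hsum t) g (mem_powersetCard.1 hI).2
    have hout : ∀ i ∉ I,
        ∑ x : Fin n → X, weightedScore p θ x i * finsetMax I (fun b => g (x b)) = 0 :=
      fun i hi => sum_weightedScore_mul_eq_zero hsum hdiff i
        ((dependsOn_finsetMax g I).mono (Set.subset_compl_singleton_iff.2 hi))
    rw [← hmarg, (hasDerivAt_sum_prod_mul hdiff _).deriv, sum_comm,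
      sum_subset (subset_univ I) fun i _ hi => hout i hi, sum_comm]
  calc ∑ x : Fin n → X, ∑ i, weightedScore p θ x i * Sfun g x i k univ
      = ∑ x : Fin n → X, 1 / (n.choose k : ℝ) * ∑ I ∈ powersetCard k univ,
          ∑ i ∈ I, weightedScore p θ x i * finsetMax I (fun b => g (x b)) := by
        simp_rw [sum_mul_Sfun, card_univ, Fintype.card_fin]
    _ = 1 / (n.choose k : ℝ) * ∑ I ∈ powersetCard k univ, deriv maxAtK θ := by
        rw [← mul_sum, sum_comm, sum_congr rfl hterm]
    _ = deriv maxAtK θ := by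
        rw [sum_const, card_powersetCard, card_univ, Fintype.card_fin, nsmul_eq_mul]
        field_simp

theorem unbiased_loo_maxgk_gradient_estimator_general {X : Type*} [Fintype X]
    (p : ℝ → X → ℝ)
    (hpos : ∀ θ x, 0 < p θ x)
    (hsum : ∀ θ, ∑ x, p θ x = 1)
    (hdiff : ∀ x, Differentiable ℝ fun θ => p θ x)
    (g : X → ℝ)
    (n k : ℕ) (hkn : k < n) (θ : ℝ) :
    ∑ x : Fin n → X, (∏ i, p θ (x i)) *
        ∑ i, (Sfun g x i k Finset.univ -
              (1 / ((n : ℝ) - 1)) *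
                ∑ j ∈ Finset.univ.erase i, Sfun g x j k (Finset.univ.erase i)) *
          (deriv (fun t => p t (x i)) θ / p θ (x i))
      = deriv (fun t => ∑ y : Fin k → X,
          (∏ i, p t (y i)) * finsetMax (Finset.univ : Finset (Fin k)) (fun i => g (y i))) θ := by
  have hdiffθ : ∀ a, DifferentiableAt ℝ (fun t => p t a) θ := fun a => (hdiff a).differentiableAt
  have hbaseline : ∀ i, ∑ x : Fin n → X, weightedScore p θ x i *
      ((1 / ((n : ℝ) - 1)) * ∑ j ∈ univ.erase i, Sfun g x j k (univ.erase i)) = 0 :=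
    fun i => sum_weightedScore_mul_eq_zero hsum hdiffθ i fun x y hxy =>
      congrArg _ (sum_congr rfl fun j _ =>
        dependsOn_Sfun g j k _ fun b hb => hxy b (ne_of_mem_erase hb))
  calc _ = ∑ x : Fin n → X, ∑ i, weightedScore p θ x i *
        (Sfun g x i k univ - (1 / ((n : ℝ) - 1)) *
          ∑ j ∈ univ.erase i, Sfun g x j k (univ.erase i)) := by
        refine sum_congr rfl fun x _ => ?_
        rw [mul_sum]
        refine sum_congr rfl fun i _ => ?_
        rw [← prod_mul_div_eq_weightedScore (hpos θ (x i)).ne']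
        ring
    _ = ∑ x : Fin n → X, ∑ i, weightedScore p θ x i * Sfun g x i k univ := by
        simp_rw [mul_sub, sum_sub_distrib]
        rw [sub_eq_self, sum_comm]
        exact sum_eq_zero fun i _ => hbaseline i
    _ = _ := sum_weightedScore_mul_Sfun_univ hsum hdiffθ g hkn.le

/-- The leave-one-out baselined estimator ∑_i s_i^{loo}(x) ∇_θ log p(xᵢ|θ),
with s_i^{loo}(x) = S(i, k, {1,...,n}; x) − (1/(n−1)) ∑_{j≠i} S(j, k, {1,...,n}∖{i}; x),
is an unbiased estimator of the gradient of
maxg@k(θ) = ∑_{y : Fin k → X} (∏ᵢ p(θ, yᵢ)) · max_{1≤i≤k} g(yᵢ), for 1 ≤ k < n. -/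
theorem unbiased_loo_maxgk_gradient_estimator {X : Type*} [Fintype X] [Nonempty X]
    (p : ℝ → X → ℝ)
    (hpos : ∀ θ x, 0 < p θ x)
    (hsum : ∀ θ, ∑ x, p θ x = 1)
    (hdiff : ∀ x, Differentiable ℝ fun θ => p θ x)
    (g : X → ℝ)
    (n k : ℕ) (hk : 1 ≤ k) (hkn : k < n) (θ : ℝ) :
    ∑ x : Fin n → X, (∏ i, p θ (x i)) *
        ∑ i, (Sfun g x i k Finset.univ -
              (1 / ((n : ℝ) - 1)) *
                ∑ j ∈ Finset.univ.erase i, Sfun g x j k (Finset.univ.erase i)) *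
          (deriv (fun t => p t (x i)) θ / p θ (x i))
      = deriv (fun t => ∑ y : Fin k → X,
          (∏ i, p t (y i)) * finsetMax (Finset.univ : Finset (Fin k)) (fun i => g (y i))) θ :=
  unbiased_loo_maxgk_gradient_estimator_general p hpos hsum hdiff g n k hkn θ
end

section
/- Fix natural numbers n ≥ 1 and k ≥ 1. There exists a function T : (Fin n → Bool) → ℝ such that for every p ∈ [0,1], ∑_{ω : Fin n → Bool} T(ω) · p^{N(ω)} · (1−p)^{n−N(ω)} = 1 − (1−p)^k, where N(ω) = #{i : ω(i) = true}, if and only if n ≥ k. In other words, pass@k is unbiasedly estimable from n i.i.d. samples if and only if n ≥ k. -/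
/-!
The expected value of any estimator is a polynomial in `p` of degree at most `n`, whereas
`1 - (1 - p) ^ k` has degree `k`; agreement on the infinite set `[0, 1]` forces equality of
polynomials, hence `k ≤ n`. Conversely, for `k ≤ n` the estimator `1 - C(n - N, k) / C(n, k)`,
the chance that a uniformly random `k`-subset of the samples contains a success, is unbiased:
the identity `C(n, m) C(n - m, k) = C(n, k) C(n - k, m)` turns its expectation into
`(1 - p) ^ k` times a binomial expansion of `(p + (1 - p)) ^ (n - k)`.
-/

open Finset Polynomial

theorem Nat.choose_mul_choose_sub_comm (n m k : ℕ) :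
    n.choose m * (n - m).choose k = n.choose k * (n - k).choose m := by
  have hm := Nat.choose_mul (n := n) (le_add_right m k)
  have hk := Nat.choose_mul (n := n) (le_add_left k m)
  simp only [Nat.add_sub_cancel_left, Nat.add_sub_cancel] at hm hk
  rw [← hm, ← hk, Nat.choose_symm_add]

theorem Fintype.sum_fun_bool_apply_card {α M : Type*} [Fintype α] [DecidableEq α]
    [AddCommMonoid M] (g : ℕ → M) :
    ∑ ω : α → Bool, g #{i | ω i = true} =
      ∑ m ∈ range (card α + 1), (card α).choose m • g m := by
  let e : (α → Bool) ≃ Finset α :=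
    { toFun ω := {i | ω i = true}
      invFun s i := decide (i ∈ s)
      left_inv ω := by ext; simp
      right_inv s := by ext; simp }
  rw [← card_univ, ← sum_powerset_apply_card, powerset_univ]
  exact Fintype.sum_equiv e _ (fun s => g #s) fun _ => rfl

theorem sum_choose_mul_choose_sub_mul_pow_mul_pow {R : Type*} [CommSemiring R] {n k : ℕ}
    (hkn : k ≤ n) (x y : R) :
    ∑ m ∈ range (n + 1), (n.choose m * (n - m).choose k : R) * x ^ m * y ^ (n - m) =
      n.choose k * y ^ k * (x + y) ^ (n - k) := by
  have hterm : ∀ m, (n.choose m * (n - m).choose k : R) * x ^ m * y ^ (n - m) =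
      n.choose k * y ^ k * (x ^ m * y ^ (n - k - m) * (n - k).choose m) := by
    intro m
    rw [← Nat.cast_mul, Nat.choose_mul_choose_sub_comm, Nat.cast_mul]
    rcases le_or_gt m (n - k) with hm | hm
    · rw [show n - m = n - k - m + k by omega, pow_add]
      ring
    · simp [Nat.choose_eq_zero_of_lt hm]
  rw [sum_congr rfl fun m _ => hterm m, ← mul_sum, add_pow]
  congr 1
  refine (sum_subset (range_subset_range.2 (by omega)) fun m _ hm => ?_).symm
  simp [Nat.choose_eq_zero_of_lt (by simpa using hm : n - k < m)]

theorem natDegree_one_sub_X {R : Type*} [CommRing R] [Nontrivial R] :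
    (1 - X : R[X]).natDegree = 1 := by
  compute_degree!

theorem natDegree_X_pow_mul_one_sub_X_pow_le {R : Type*} [CommRing R] (m n : ℕ) :
    (X ^ m * (1 - X : R[X]) ^ n).natDegree ≤ m + n := by
  compute_degree

theorem natDegree_sum_C_mul_X_pow_mul_one_sub_X_pow_le {R ι : Type*} [CommRing R]
    (s : Finset ι) (c : ι → R) {e : ι → ℕ} {n : ℕ} (he : ∀ i ∈ s, e i ≤ n) :
    (∑ i ∈ s, C (c i) * X ^ e i * (1 - X) ^ (n - e i)).natDegree ≤ n := by
  refine natDegree_sum_le_of_forall_le _ _ fun i hi => ?_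
  rw [mul_assoc]
  exact natDegree_C_mul_le _ _ |>.trans <|
    (natDegree_X_pow_mul_one_sub_X_pow_le _ _).trans (by have := he i hi; omega)

theorem le_natDegree_of_eval_eq_one_sub_one_sub_pow {R : Type*} [CommRing R] [IsDomain R]
    {P : R[X]} {s : Set R} (hs : s.Infinite) {k : ℕ}
    (hP : ∀ p ∈ s, P.eval p = 1 - (1 - p) ^ k) : k ≤ P.natDegree := by
  have hPeq : P = 1 - (1 - X) ^ k :=
    eq_of_infinite_eval_eq _ _ (hs.mono fun p hp => by simp [hP p hp])
  calc k = ((1 - X : R[X]) ^ k).natDegree := by rw [natDegree_pow, natDegree_one_sub_X, mul_one]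
    _ = (1 - P).natDegree := by rw [hPeq, sub_sub_cancel]
    _ ≤ P.natDegree := natDegree_sub_le_of_le natDegree_one.le le_rfl |>.trans (by simp)

noncomputable def passAtKEstimator (n k : ℕ) (ω : Fin n → Bool) : ℝ :=
  1 - ((n - #{i | ω i = true}).choose k : ℝ) / n.choose k

theorem sum_passAtKEstimator_mul_pow_mul_one_sub_pow {n k : ℕ} (hkn : k ≤ n) (p : ℝ) :
    ∑ ω : Fin n → Bool, passAtKEstimator n k ω * p ^ #{i | ω i = true} *
        (1 - p) ^ (n - #{i | ω i = true}) = 1 - (1 - p) ^ k := by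
  have hchoose : (n.choose k : ℝ) ≠ 0 := by exact_mod_cast (Nat.choose_pos hkn).ne'
  calc _ = ∑ m ∈ range (n + 1), n.choose m •
        ((1 - ((n - m).choose k : ℝ) / n.choose k) * p ^ m * (1 - p) ^ (n - m)) := by
        simpa [passAtKEstimator] using Fintype.sum_fun_bool_apply_card (α := Fin n)
          fun m => (1 - ((n - m).choose k : ℝ) / n.choose k) * p ^ m * (1 - p) ^ (n - m)
    _ = ∑ m ∈ range (n + 1), p ^ m * (1 - p) ^ (n - m) * n.choose m -
        (∑ m ∈ range (n + 1),
          (n.choose m * (n - m).choose k : ℝ) * p ^ m * (1 - p) ^ (n - m)) / n.choose k := by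
        rw [sum_div, ← sum_sub_distrib]
        refine sum_congr rfl fun m _ => ?_
        rw [nsmul_eq_mul]
        field_simp
    _ = 1 - (1 - p) ^ k := by
        rw [← add_pow, sum_choose_mul_choose_sub_mul_pow_mul_pow hkn]
        field_simp
        simp

theorem passk_unbiased_estimable_iff_n_ge_k_general (n k : ℕ) :
    (∃ T : (Fin n → Bool) → ℝ, ∀ p ∈ Set.Icc (0 : ℝ) 1,
        ∑ ω : Fin n → Bool,
          T ω * p ^ (Finset.univ.filter fun i => ω i = true).card *
            (1 - p) ^ (n - (Finset.univ.filter fun i => ω i = true).card)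
          = 1 - (1 - p) ^ k)
    ↔ k ≤ n := by
  constructor
  · rintro ⟨T, hT⟩
    have hdeg := natDegree_sum_C_mul_X_pow_mul_one_sub_X_pow_le univ T
      (e := fun ω => #{i | ω i = true}) fun ω _ => (card_le_univ _).trans_eq (Fintype.card_fin n)
    refine (le_natDegree_of_eval_eq_one_sub_one_sub_pow (Set.Icc_infinite zero_lt_one)
      fun p hp => ?_).trans hdeg
    simpa [eval_finsetSum] using hT p hp
  · intro hkn
    exact ⟨passAtKEstimator n k, fun p _ => sum_passAtKEstimator_mul_pow_mul_one_sub_pow hkn p⟩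

/-- For n ≥ 1 and k ≥ 1, there exists an unbiased estimator
T : (Fin n → Bool) → ℝ of pass@k = 1 − (1−p)^k from n i.i.d. Bernoulli(p)
samples, i.e. ∑_ω T(ω)·p^{N(ω)}·(1−p)^{n−N(ω)} = 1 − (1−p)^k for all
p ∈ [0,1] where N(ω) counts successes, if and only if n ≥ k. -/
theorem passk_unbiased_estimable_iff_n_ge_k (n k : ℕ) (hn : 1 ≤ n) (hk : 1 ≤ k) :
    (∃ T : (Fin n → Bool) → ℝ, ∀ p ∈ Set.Icc (0 : ℝ) 1,
        ∑ ω : Fin n → Bool,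
          T ω * p ^ (Finset.univ.filter fun i => ω i = true).card *
            (1 - p) ^ (n - (Finset.univ.filter fun i => ω i = true).card)
          = 1 - (1 - p) ^ k)
    ↔ k ≤ n :=
  passk_unbiased_estimable_iff_n_ge_k_general n k
end
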